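/- Let G = (V,E) be a finite graph with all degrees positive, in which each node independently becomes private with probability p ∈ [0,1), and let each node carry a deterministic label set L(i). Define X̃_label = Σ_{v_i ∈ V} 1_{v_i public} · 1_{l ∈ L(i)} · d_i*/d_i. Then E[X̃_label] = (1-p)^2 Σ_{v_i ∈ V} 1_{l ∈ L(i)}, and consequently E[X̃_label] / E[Σ_{v_i} 1_{v_i public} d_i*/d_i] = ρ(l) = (Σ_{v_i} 1_{l ∈ L(i)})/n. -/

import Mathlib

/-!
Write `1_v` for the indicator that `v` is public. Then `1_v · d_v* = Σ_{u ~ v} 1_v 1_u`, and for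
`u ~ v` we have `u ≠ v`, so independence gives `E[1_v 1_u] = (1-p)²`. Hence
`E[1_v d_v*/d_v] = (1-p)²` for every node of positive degree, and both expectations are
`(1-p)²` times the number of nodes they count; the factor `(1-p)² ≠ 0` cancels in the ratio.
-/

open MeasureTheory ProbabilityTheory Finset

lemma ite_and_eq_indicator_inter {Ω : Type*} (X Y : Ω → Bool) :
    (fun ω => if X ω = true ∧ Y ω = true then (1 : ℝ) else 0)
      = ({ω | X ω = true} ∩ {ω | Y ω = true}).indicator 1 := by
  ext ω
  simp [Set.indicator_apply]

section PairIndicator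

variable {Ω : Type*} [MeasurableSpace Ω] {μ : Measure Ω} {X Y : Ω → Bool}

lemma measurableSet_inter_eq_true (hX : Measurable X) (hY : Measurable Y) :
    MeasurableSet ({ω | X ω = true} ∩ {ω | Y ω = true}) :=
  (hX (measurableSet_singleton true)).inter (hY (measurableSet_singleton true))

lemma integrable_ite_and [IsFiniteMeasure μ] (hX : Measurable X) (hY : Measurable Y) :
    Integrable (fun ω => if X ω = true ∧ Y ω = true then (1 : ℝ) else 0) μ := by
  rw [ite_and_eq_indicator_inter]
  exact (integrable_const 1).indicator (measurableSet_inter_eq_true hX hY)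

lemma integral_ite_and_eq_mul_of_indepFun (hX : Measurable X) (hY : Measurable Y)
    (hXY : IndepFun X Y μ) :
    ∫ ω, (if X ω = true ∧ Y ω = true then (1 : ℝ) else 0) ∂μ
      = μ.real {ω | X ω = true} * μ.real {ω | Y ω = true} := by
  rw [ite_and_eq_indicator_inter, integral_indicator_one (measurableSet_inter_eq_true hX hY),
    measureReal_def, measureReal_def, measureReal_def, ← ENNReal.toReal_mul]
  exact congrArg ENNReal.toReal <| hXY.measure_inter_preimage_eq_mul _ _
    (measurableSet_singleton true) (measurableSet_singleton true)

end PairIndicator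

namespace SimpleGraph

variable {V : Type*} [Fintype V] (G : SimpleGraph V) [DecidableRel G.Adj]

lemma ite_mul_card_filter_adj_eq_sum (b : V → Bool) (v : V) :
    (if b v = true then (1 : ℝ) else 0) * (#{u | G.Adj v u ∧ b u = true} : ℝ)
      = ∑ u ∈ G.neighborFinset v, if b v = true ∧ b u = true then (1 : ℝ) else 0 := by
  rw [Finset.natCast_card_filter, neighborFinset_eq_filter, Finset.sum_filter, Finset.mul_sum]
  refine Finset.sum_congr rfl fun u _ => ?_
  by_cases hv : b v = true <;> by_cases hadj : G.Adj v u <;> simp [hv, hadj]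

lemma ite_mul_card_public_neighbors_eq_sum {Ω : Type*} (pub : V → Ω → Bool) (v : V) :
    (fun ω => (if pub v ω = true then (1 : ℝ) else 0)
        * (#{u | G.Adj v u ∧ pub u ω = true} : ℝ))
      = fun ω => ∑ u ∈ G.neighborFinset v,
          if pub v ω = true ∧ pub u ω = true then (1 : ℝ) else 0 :=
  funext fun ω => G.ite_mul_card_filter_adj_eq_sum (pub · ω) v

variable {Ω : Type*} [MeasureSpace Ω] [IsProbabilityMeasure (ℙ : Measure Ω)]
  {pub : V → Ω → Bool} {p : ℝ}

lemma integrable_ite_mul_card_public_neighbors (hmeas : ∀ v, Measurable (pub v)) (v : V) :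
    Integrable (fun ω => (if pub v ω = true then (1 : ℝ) else 0)
      * (#{u | G.Adj v u ∧ pub u ω = true} : ℝ)) := by
  rw [ite_mul_card_public_neighbors_eq_sum]
  exact integrable_finsetSum _ fun u _ => integrable_ite_and (hmeas v) (hmeas u)

lemma integral_ite_mul_card_public_neighbors (hmeas : ∀ v, Measurable (pub v))
    (hindep : Pairwise fun u w => IndepFun (pub u) (pub w) ℙ)
    (hprob : ∀ v, (ℙ {ω : Ω | pub v ω = true}).toReal = 1 - p)
    (v : V) :
    ∫ ω, (if pub v ω = true then (1 : ℝ) else 0)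
        * (#{u | G.Adj v u ∧ pub u ω = true} : ℝ)
      = G.degree v * (1 - p) ^ 2 := by
  have hpair : ∀ u ∈ G.neighborFinset v,
      ∫ ω, (if pub v ω = true ∧ pub u ω = true then (1 : ℝ) else 0) = (1 - p) ^ 2 := by
    intro u hu
    rw [integral_ite_and_eq_mul_of_indepFun (hmeas v) (hmeas u)
      (hindep (G.ne_of_adj ((G.mem_neighborFinset v u).mp hu))),
      measureReal_def, measureReal_def, hprob, hprob, sq]
  rw [ite_mul_card_public_neighbors_eq_sum,
    integral_finsetSum _ fun u _ => integrable_ite_and (hmeas v) (hmeas u),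
    Finset.sum_congr rfl hpair, Finset.sum_const, card_neighborFinset_eq_degree, nsmul_eq_mul]

lemma integral_sum_ite_mul_mul_card_public_neighbors_div_degree
    (hdeg : ∀ v, G.degree v ≠ 0) (hmeas : ∀ v, Measurable (pub v))
    (hindep : Pairwise fun u w => IndepFun (pub u) (pub w) ℙ)
    (hprob : ∀ v, (ℙ {ω : Ω | pub v ω = true}).toReal = 1 - p)
    (c : V → ℝ) :
    ∫ ω, ∑ v, (if pub v ω = true then (1 : ℝ) else 0) * c v
        * ((#{u | G.Adj v u ∧ pub u ω = true} : ℝ) / G.degree v)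
      = (1 - p) ^ 2 * ∑ v, c v := by
  have hsummand : ∀ v ω, (if pub v ω = true then (1 : ℝ) else 0) * c v
        * ((#{u | G.Adj v u ∧ pub u ω = true} : ℝ) / G.degree v)
      = c v / G.degree v * ((if pub v ω = true then (1 : ℝ) else 0)
        * (#{u | G.Adj v u ∧ pub u ω = true} : ℝ)) := fun v ω => by ring
  simp_rw [hsummand]
  rw [integral_finsetSum _ fun v _ =>
      (G.integrable_ite_mul_card_public_neighbors hmeas v).const_mul _, Finset.mul_sum]
  refine Finset.sum_congr rfl fun v _ => ?_
  rw [integral_const_mul, G.integral_ite_mul_card_public_neighbors hmeas hindep hprob]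
  field_simp [hdeg v]

end SimpleGraph

theorem stmt15_general {V : Type*} [Fintype V] {Ω : Type*} [MeasureSpace Ω]
    [IsProbabilityMeasure (ℙ : Measure Ω)]
    (G : SimpleGraph V) [DecidableRel G.Adj]
    (hdeg : ∀ v, 1 ≤ G.degree v)
    {Label : Type*} (l : Label) (L : V → Set Label) [∀ v, Decidable (l ∈ L v)]
    (p : ℝ) (hp1 : p < 1)
    (pub : V → Ω → Bool) (hmeas : ∀ v, Measurable (pub v))
    (hindep : iIndepFun pub ℙ)
    (hprob : ∀ v, (ℙ {ω : Ω | pub v ω = true}).toReal = 1 - p)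
    (dstar : V → Ω → ℕ)
    (hdstar : ∀ v ω, dstar v ω
      = (Finset.univ.filter (fun u => G.Adj v u ∧ pub u ω = true)).card)
    (EXlabel EXtilde : ℝ)
    (hEXlabel : EXlabel = ∫ ω, (∑ v, (if pub v ω = true then (1 : ℝ) else 0) *
        (if l ∈ L v then (1 : ℝ) else 0) * ((dstar v ω : ℝ) / (G.degree v : ℝ))) ∂ℙ)
    (hEXtilde : EXtilde = ∫ ω, (∑ v, (if pub v ω = true then (1 : ℝ) else 0) *
        ((dstar v ω : ℝ) / (G.degree v : ℝ))) ∂ℙ) :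
    (EXlabel = (1 - p) ^ 2 * ∑ v, (if l ∈ L v then (1 : ℝ) else 0)) ∧
    (EXlabel / EXtilde
      = (∑ v, (if l ∈ L v then (1 : ℝ) else 0)) / (Fintype.card V : ℝ)) := by
  obtain rfl : dstar = fun v ω => #{u | G.Adj v u ∧ pub u ω = true} :=
    funext fun v => funext (hdstar v)
  have hpair : Pairwise fun u w => IndepFun (pub u) (pub w) ℙ := fun _ _ => hindep.indepFun
  have hdeg' : ∀ v, G.degree v ≠ 0 := fun v => Nat.one_le_iff_ne_zero.mp (hdeg v)
  have hlabel : EXlabel = (1 - p) ^ 2 * ∑ v, (if l ∈ L v then (1 : ℝ) else 0) := by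
    rw [hEXlabel, G.integral_sum_ite_mul_mul_card_public_neighbors_div_degree hdeg' hmeas hpair
      hprob]
  have htilde : EXtilde = (1 - p) ^ 2 * Fintype.card V := by
    simpa [hEXtilde] using
      G.integral_sum_ite_mul_mul_card_public_neighbors_div_degree hdeg' hmeas hpair hprob 1
  have hp : (1 - p) ^ 2 ≠ 0 := pow_ne_zero 2 (sub_ne_zero.mpr hp1.ne')
  exact ⟨hlabel, by rw [hlabel, htilde, mul_div_mul_left _ _ hp]⟩

/-- With i.i.d. privacy labels, all degrees positive, and
deterministic label sets, for
`X̃_label = Σ_i 1_{v_i public} 1_{l ∈ L(i)} d_i*/d_i` one has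
`E[X̃_label] = (1-p)² Σ_i 1_{l ∈ L(i)}`, and
`E[X̃_label]/E[Σ_i 1_{v_i public} d_i*/d_i] = ρ(l) = (Σ_i 1_{l ∈ L(i)})/n`. -/
theorem stmt15 {V : Type*} [Fintype V] [DecidableEq V] {Ω : Type*} [MeasureSpace Ω]
    [IsProbabilityMeasure (ℙ : Measure Ω)]
    (G : SimpleGraph V) [DecidableRel G.Adj]
    (hdeg : ∀ v, 1 ≤ G.degree v)
    {Label : Type*} (l : Label) (L : V → Set Label) [∀ v, Decidable (l ∈ L v)]
    (p : ℝ) (hp0 : 0 ≤ p) (hp1 : p < 1)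
    (pub : V → Ω → Bool) (hmeas : ∀ v, Measurable (pub v))
    (hindep : iIndepFun pub ℙ)
    (hprob : ∀ v, (ℙ {ω : Ω | pub v ω = true}).toReal = 1 - p)
    (dstar : V → Ω → ℕ)
    (hdstar : ∀ v ω, dstar v ω
      = (Finset.univ.filter (fun u => G.Adj v u ∧ pub u ω = true)).card)
    (EXlabel EXtilde : ℝ)
    (hEXlabel : EXlabel = ∫ ω, (∑ v, (if pub v ω = true then (1 : ℝ) else 0) *
        (if l ∈ L v then (1 : ℝ) else 0) * ((dstar v ω : ℝ) / (G.degree v : ℝ))) ∂ℙ)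
    (hEXtilde : EXtilde = ∫ ω, (∑ v, (if pub v ω = true then (1 : ℝ) else 0) *
        ((dstar v ω : ℝ) / (G.degree v : ℝ))) ∂ℙ) :
    (EXlabel = (1 - p) ^ 2 * ∑ v, (if l ∈ L v then (1 : ℝ) else 0)) ∧
    (EXlabel / EXtilde
      = (∑ v, (if l ∈ L v then (1 : ℝ) else 0)) / (Fintype.card V : ℝ)) :=
  stmt15_general G hdeg l L p hp1 pub hmeas hindep hprob dstar hdstar EXlabel EXtilde hEXlabel
    hEXtilde
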